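/- Let G ⊆ [d] × [n] be a bipartite graph. The rank of a subset A ⊆ [n] in the transversal matroid M(G) equals min over all I ⊆ [d] of (|A ∩ J_I(G)| + d − |I|). Consequently, any point x ∈ ℝⁿ satisfying 0 ≤ x_j ≤ 1 for all j, ∑_j x_j = d, and ∑_{j ∈ J_I(G)} x_j ≥ |I| for all I ⊆ [d] also satisfies ∑_{j ∈ A} x_j ≤ rank_{M(G)}(A) for all A ⊆ [n]. -/

import Mathlib

open Finset

/-- The neighborhood `J_I(G)` of a set `I` of left vertices. -/
def nbr {d n : ℕ} (G : Finset (Fin d × Fin n)) (I : Finset (Fin d)) : Finset (Fin n) :=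
  (G.filter (fun e => e.1 ∈ I)).image Prod.snd

/-- `B ⊆ [n]` can be matched into `[d]` along edges of `G`. -/
def Matchable {d n : ℕ} (G : Finset (Fin d × Fin n)) (B : Finset (Fin n)) : Prop :=
  ∃ f : Fin n → Fin d, Set.InjOn f B ∧ ∀ j ∈ B, (f j, j) ∈ G

/-- The rank of `A` in the transversal matroid of `G`: the maximal size of a
matchable subset of `A`. -/
noncomputable def transversalRank {d n : ℕ} (G : Finset (Fin d × Fin n))
    (A : Finset (Fin n)) : ℕ :=
  sSup {k : ℕ | ∃ B ⊆ A, B.card = k ∧ Matchable G B}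

lemma mem_nbr {d n : ℕ} (G : Finset (Fin d × Fin n)) {I : Finset (Fin d)} {j : Fin n} :
    j ∈ nbr G I ↔ ∃ i ∈ I, (i, j) ∈ G := by
  simp only [nbr, Finset.mem_image, Finset.mem_filter]
  constructor
  · rintro ⟨⟨i, j'⟩, ⟨hG, hi⟩, rfl⟩
    exact ⟨i, hi, hG⟩
  · rintro ⟨i, hi, hG⟩
    exact ⟨(i, j), ⟨hG, hi⟩, rfl⟩

lemma matchable_card_le {d n : ℕ} (G : Finset (Fin d × Fin n)) {A B : Finset (Fin n)}
    (hBA : B ⊆ A) (h : Matchable G B) (I : Finset (Fin d)) :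
    B.card ≤ (A ∩ nbr G I).card + (d - I.card) := by
  classical
  obtain ⟨f, hinj, hf⟩ := h
  have hsplit := Finset.card_filter_add_card_filter_not (s := B)
    (p := fun j => f j ∈ I)
  have h1 : (B.filter (fun j => f j ∈ I)).card ≤ (A ∩ nbr G I).card := by
    apply Finset.card_le_card
    intro j hj
    rw [Finset.mem_filter] at hj
    exact Finset.mem_inter.2 ⟨hBA hj.1, (mem_nbr G).2 ⟨f j, hj.2, hf j hj.1⟩⟩
  have h2 : (B.filter (fun j => ¬ f j ∈ I)).card ≤ d - I.card := by
    have hle : (B.filter (fun j => ¬ f j ∈ I)).card ≤ Iᶜ.card := by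
      apply Finset.card_le_card_of_injOn f
      · intro j hj
        rw [Finset.mem_coe, Finset.mem_filter] at hj
        simpa using hj.2
      · exact hinj.mono (by exact_mod_cast Finset.filter_subset _ _)
    have : Iᶜ.card = d - I.card := by
      rw [Finset.card_compl, Fintype.card_fin]
    omega
  omega

lemma exists_good_matchable {d n : ℕ} (G : Finset (Fin d × Fin n)) (hd : 0 < d)
    (A : Finset (Fin n)) :
    ∃ B ⊆ A, Matchable G B ∧ ∃ I : Finset (Fin d),
      (A ∩ nbr G I).card + (d - I.card) ≤ B.card := by
  classical
  set r : Fin n → Finset (Fin d) := fun j => univ.filter (fun i => (i, j) ∈ G) with hr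
  obtain ⟨S, hSmem, hSmax⟩ := Finset.exists_max_image A.powerset
      (fun S => (S.card : ℤ) - ((S.biUnion r).card : ℤ)) ⟨∅, by simp⟩
  have hS_A : S ⊆ A := Finset.mem_powerset.1 hSmem
  have hbcS : (S.biUnion r).card ≤ S.card := by
    have h0 := hSmax ∅ (by simp)
    simp only [Finset.card_empty, Finset.biUnion_empty, Nat.cast_zero, sub_self] at h0
    omega
  set δ : ℕ := S.card - (S.biUnion r).card with hδ
  set t : {j // j ∈ A} → Finset (Fin d ⊕ Fin δ) := fun j => (r j.1).disjSum univ with ht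
  have hall : ∀ s : Finset {j // j ∈ A}, s.card ≤ (s.biUnion t).card := by
    intro s
    rcases s.eq_empty_or_nonempty with rfl | ⟨j0, hj0⟩
    · simp
    · set Sv := s.image Subtype.val with hSv
      have hcard : Sv.card = s.card := Finset.card_image_of_injective _ Subtype.val_injective
      have hsub : (Sv.biUnion r).disjSum (univ : Finset (Fin δ)) ⊆ s.biUnion t := by
        intro x hx
        rcases x with i | b
        · rw [Finset.inl_mem_disjSum, Finset.mem_biUnion] at hx
          obtain ⟨j, hj, hij⟩ := hx
          rw [hSv, Finset.mem_image] at hj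
          obtain ⟨j', hj', rfl⟩ := hj
          exact Finset.mem_biUnion.2 ⟨j', hj', by
            simp only [ht, Finset.inl_mem_disjSum]; exact hij⟩
        · exact Finset.mem_biUnion.2 ⟨j0, hj0, by
            simp only [ht, Finset.inr_mem_disjSum]; exact Finset.mem_univ _⟩
      have hc := Finset.card_le_card hsub
      rw [Finset.card_disjSum, Finset.card_univ, Fintype.card_fin] at hc
      have hSvA : Sv ∈ A.powerset := by
        rw [Finset.mem_powerset]
        intro j hj
        rw [hSv, Finset.mem_image] at hj
        obtain ⟨j', _, rfl⟩ := hj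
        exact j'.2
      have hmax := hSmax Sv hSvA
      omega
  obtain ⟨F, hFinj, hFmem⟩ := (Finset.all_card_le_biUnion_card_iff_exists_injective t).1 hall
  haveI : Nonempty (Fin d) := ⟨⟨0, hd⟩⟩
  set B : Finset (Fin n) := (A.attach.filter (fun j => (F j).isLeft)).image Subtype.val with hB
  have hBA : B ⊆ A := by
    intro j hj
    rw [hB, Finset.mem_image] at hj
    obtain ⟨j', _, rfl⟩ := hj
    exact j'.2
  have hBcard : A.card - δ ≤ B.card := by
    have h1 : B.card = (A.attach.filter (fun j => (F j).isLeft)).card :=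
      Finset.card_image_of_injective _ Subtype.val_injective
    have h2 := Finset.card_filter_add_card_filter_not (s := A.attach)
        (p := fun j => (F j).isLeft)
    have h3 : (A.attach.filter (fun j => ¬ (F j).isLeft)).card ≤ δ := by
      have hle : (A.attach.filter (fun j => ¬ (F j).isLeft)).card ≤
          (((univ : Finset (Fin δ)).map ⟨Sum.inr, Sum.inr_injective⟩ : Finset (Fin d ⊕ Fin δ))).card := by
        apply Finset.card_le_card_of_injOn F
        · intro j hj
          rw [Finset.mem_coe, Finset.mem_filter] at hj
          rw [Finset.mem_coe, Finset.mem_map]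
          cases hF : F j with
          | inl i => rw [hF] at hj; simp at hj
          | inr b => exact ⟨b, Finset.mem_univ _, rfl⟩
        · exact hFinj.injOn
      simpa using hle
    have h4 : A.attach.card = A.card := Finset.card_attach
    omega
  have key : ∀ j ∈ B, ∃ i : Fin d, (i, j) ∈ G ∧ ∀ hj : j ∈ A, F ⟨j, hj⟩ = Sum.inl i := by
    intro j hj
    rw [hB, Finset.mem_image] at hj
    obtain ⟨⟨j, hjA⟩, hjf, rfl⟩ := hj
    rw [Finset.mem_filter] at hjf
    cases hF : F ⟨j, hjA⟩ with
    | inl i =>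
      refine ⟨i, ?_, fun hj' => hF⟩
      have hm := hFmem ⟨j, hjA⟩
      rw [hF, ht] at hm
      simp only [Finset.inl_mem_disjSum, hr, Finset.mem_filter, Finset.mem_univ,
        true_and] at hm
      exact hm
    | inr b => rw [hF] at hjf; simp at hjf
  choose! g hg1 hg2 using key
  have hmatch : Matchable G B := by
    refine ⟨fun j => if h : j ∈ B then g j else Classical.arbitrary (Fin d), ?_, ?_⟩
    · intro a ha b hb hab
      rw [Finset.mem_coe] at ha hb
      simp only [dif_pos ha, dif_pos hb] at hab
      have h1 := hg2 a ha (hBA ha)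
      have h2 := hg2 b hb (hBA hb)
      rw [hab] at h1
      have := hFinj (h1.trans h2.symm)
      exact congrArg Subtype.val this
    · intro j hj
      simp only [dif_pos hj]
      exact hg1 j hj
  refine ⟨B, hBA, hmatch, (S.biUnion r)ᶜ, ?_⟩
  have hIcard : ((S.biUnion r)ᶜ).card = d - (S.biUnion r).card := by
    rw [Finset.card_compl, Fintype.card_fin]
  have hsub2 : A ∩ nbr G ((S.biUnion r)ᶜ) ⊆ A \ S := by
    intro j hj
    rw [Finset.mem_inter] at hj
    rw [Finset.mem_sdiff]
    refine ⟨hj.1, fun hjS => ?_⟩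
    obtain ⟨i, hiI, hij⟩ := (mem_nbr G).1 hj.2
    rw [Finset.mem_compl] at hiI
    exact hiI (Finset.mem_biUnion.2 ⟨j, hjS, by
      simp only [hr, Finset.mem_filter, Finset.mem_univ, true_and]; exact hij⟩)
  have hcard2 := Finset.card_le_card hsub2
  have h5 : (A \ S).card = A.card - S.card := Finset.card_sdiff_of_subset hS_A
  have h6 : S.card ≤ A.card := Finset.card_le_card hS_A
  have h7 : (S.biUnion r).card ≤ d := by
    have := Finset.card_le_univ (S.biUnion r)
    simpa [Fintype.card_fin] using this
  rw [hIcard]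
  omega

theorem stmt_7 (d n : ℕ) (G : Finset (Fin d × Fin n)) :
    (∀ A : Finset (Fin n),
      transversalRank G A =
        Finset.univ.inf' (Finset.univ_nonempty)
          (fun I : Finset (Fin d) => (A ∩ nbr G I).card + (d - I.card))) ∧
    ∀ x : Fin n → ℝ, (∀ j, 0 ≤ x j ∧ x j ≤ 1) → (∑ j, x j) = d →
      (∀ I : Finset (Fin d), (I.card : ℝ) ≤ ∑ j ∈ nbr G I, x j) →
      ∀ A : Finset (Fin n), (∑ j ∈ A, x j) ≤ (transversalRank G A : ℝ) := by
  classical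
  have rank_eq : ∀ A : Finset (Fin n),
      transversalRank G A = Finset.univ.inf' (Finset.univ_nonempty)
        (fun I : Finset (Fin d) => (A ∩ nbr G I).card + (d - I.card)) := by
    intro A
    rcases Nat.eq_zero_or_pos d with rfl | hd
    · -- d = 0
      have hzero : ∀ k ∈ {k : ℕ | ∃ B ⊆ A, B.card = k ∧ Matchable G B}, k = 0 := by
        rintro k ⟨B, hBA, rfl, f, hinj, hf⟩
        rcases B.eq_empty_or_nonempty with rfl | ⟨j, hj⟩
        · simp
        · exact (f j).elim0
      have hL : transversalRank G A = 0 := by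
        rw [transversalRank]
        rcases Set.eq_empty_or_nonempty {k : ℕ | ∃ B ⊆ A, B.card = k ∧ Matchable G B} with
          he | hne
        · rw [he]
          exact csSup_empty
        · have := csSup_le hne (fun k hk => le_of_eq (hzero k hk))
          omega
      have hR : Finset.univ.inf' (Finset.univ_nonempty)
          (fun I : Finset (Fin 0) => (A ∩ nbr G I).card + (0 - I.card)) ≤ 0 := by
        have := Finset.inf'_le (b := (∅ : Finset (Fin 0)))
          (fun I : Finset (Fin 0) => (A ∩ nbr G I).card + (0 - I.card)) (Finset.mem_univ _)
        simpa [nbr] using this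
      omega
    · haveI : Nonempty (Fin d) := ⟨⟨0, hd⟩⟩
      have h0mem : (0 : ℕ) ∈ {k : ℕ | ∃ B ⊆ A, B.card = k ∧ Matchable G B} := by
        refine ⟨∅, Finset.empty_subset A, Finset.card_empty,
          fun _ => Classical.arbitrary (Fin d), ?_, ?_⟩
        · simp
        · simp
      have hbdd : BddAbove {k : ℕ | ∃ B ⊆ A, B.card = k ∧ Matchable G B} := by
        refine ⟨n, ?_⟩
        rintro k ⟨B, _, rfl, _⟩
        exact le_trans (Finset.card_le_univ B) (by simp)
      obtain ⟨Bm, hBmA, hBmcard, hBmm⟩ := Nat.sSup_mem ⟨0, h0mem⟩ hbdd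
      apply le_antisymm
      · apply Finset.le_inf'
        intro I _
        have : transversalRank G A = Bm.card := hBmcard.symm
        rw [this]
        exact matchable_card_le G hBmA hBmm I
      · obtain ⟨B, hBA, hm, I, hI⟩ := exists_good_matchable G hd A
        calc Finset.univ.inf' (Finset.univ_nonempty)
              (fun I : Finset (Fin d) => (A ∩ nbr G I).card + (d - I.card))
            ≤ (A ∩ nbr G I).card + (d - I.card) := Finset.inf'_le _ (Finset.mem_univ I)
          _ ≤ B.card := hI
          _ ≤ transversalRank G A := le_csSup hbdd ⟨B, hBA, rfl, hm⟩
  refine ⟨rank_eq, ?_⟩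
  intro x hx hsum hI A
  rw [rank_eq A]
  obtain ⟨I₀, _, hmin⟩ := Finset.exists_mem_eq_inf' (Finset.univ_nonempty)
    (fun I : Finset (Fin d) => (A ∩ nbr G I).card + (d - I.card))
  rw [hmin]
  have hI0d : I₀.card ≤ d := by
    have := Finset.card_le_univ I₀
    simpa [Fintype.card_fin] using this
  have split : ∑ j ∈ A, x j = ∑ j ∈ A ∩ nbr G I₀, x j + ∑ j ∈ A \ nbr G I₀, x j :=
    (Finset.sum_inter_add_sum_sdiff A (nbr G I₀) x).symm
  have h1 : ∑ j ∈ A ∩ nbr G I₀, x j ≤ ((A ∩ nbr G I₀).card : ℝ) := by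
    calc ∑ j ∈ A ∩ nbr G I₀, x j ≤ ∑ _j ∈ A ∩ nbr G I₀, (1 : ℝ) :=
          Finset.sum_le_sum (fun j _ => (hx j).2)
      _ = ((A ∩ nbr G I₀).card : ℝ) := by simp
  have h2 : ∑ j ∈ A \ nbr G I₀, x j ≤ (d : ℝ) - ∑ j ∈ nbr G I₀, x j := by
    have hsub : A \ nbr G I₀ ⊆ (nbr G I₀)ᶜ := by
      intro j hj
      rw [Finset.mem_sdiff] at hj
      rw [Finset.mem_compl]
      exact hj.2
    have hmono : ∑ j ∈ A \ nbr G I₀, x j ≤ ∑ j ∈ (nbr G I₀)ᶜ, x j :=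
      Finset.sum_le_sum_of_subset_of_nonneg hsub (fun j _ _ => (hx j).1)
    have hcompl := Finset.sum_add_sum_compl (nbr G I₀) x
    rw [hsum] at hcompl
    linarith
  have h3 := hI I₀
  rw [Nat.cast_add, Nat.cast_sub hI0d]
  linarith
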